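/- arXiv:1612.03759 — 2 statements merged into one kernel-verified Lean document; each statement's English description precedes it below -/
import Mathlib

section
/- For every integer n ≥ 2, the number of triples (A, s, i), where A is a rooted plane tree with n vertices, s is a non-root vertex of A, and i is an integer with 1 ≤ i ≤ 2·depth(s) − 1 (depth(s) being the distance from the root to s), equals 4^(n−1) − binomial(2n−1, n−1). Equivalently, the sum over all rooted plane trees A with n vertices and over all non-root vertices s of A of (2·depth(s) − 1) equals 4^(n−1) − binomial(2n−1, n−1). -/
/-!
A tree with `n + 1` vertices is `node f` for a forest `f` with `n` vertices, and the pairs `(s, i)`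
it carries number `∑ (2 d + 1)` over the vertices of `f`, `d` being the depth in `f` (roots at
depth 0). Splitting off the first tree `node cs` of a forest, the vertices of `cs` move one level
down and a root is added, so the total weight `W n` of the `catalan n` forests with `n` vertices
satisfies `W (n + 1) = ∑_{i + j = n} (W i C j + (2 i + 1) C i C j + C i W j)`.
The closed form `W n = 4 ^ n - (2 n + 1).choose n` then follows by strong induction: the
convolutions of `C` with `4 ^ i` and with `(2 i + 1).choose i` are evaluated with the identity
`(n + 2) C (n + 1) = 2 (2 n + 1).choose n` and, by the symmetry `i ↔ j`, with
`2 ∑_{i + j = n} i C i C j = n C (n + 1)`.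
-/

/-- A rooted plane tree: children of every vertex are linearly ordered. -/
inductive PlaneTree : Type
  | node : List PlaneTree → PlaneTree

namespace PlaneTree

/-- The vertices of a plane tree, encoded as paths from the root
(the path records the index of the child taken at each step).
The root is the empty path. -/
def vertices : PlaneTree → List (List ℕ)
  | node cs =>
    [] :: (((List.range cs.attach.length).zip cs.attach).map
      (fun x => (vertices x.2.1).map (fun p => x.1 :: p))).flatten
decreasing_by
  have h1 := List.sizeOf_lt_of_mem x.2.2
  simp only [PlaneTree.node.sizeOf_spec]
  omega

end PlaneTree

open Finset

theorem List.nodup_flatMap_map_cons {α ι : Type*} (l : List ι) (i : ι → α)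
    (g : ι → List (List α)) (hi : (l.map i).Nodup) (hg : ∀ x ∈ l, (g x).Nodup) :
    (l.flatMap fun x => (g x).map (i x :: ·)).Nodup := by
  refine List.nodup_flatMap.mpr ⟨fun x hx => (hg x hx).map fun _ _ => List.tail_eq_of_cons_eq, ?_⟩
  refine (List.pairwise_map.mp hi).imp fun hne => ?_
  simp only [Function.onFun, List.disjoint_left, List.mem_map]
  rintro _ ⟨p, -, rfl⟩ ⟨q, -, hq⟩
  exact hne (List.head_eq_of_cons_eq hq).symm

theorem sum_antidiagonal_add_swap (n : ℕ) (g : ℕ → ℕ → ℕ) :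
    ∑ p ∈ antidiagonal n, (g p.1 p.2 + g p.2 p.1) = 2 * ∑ p ∈ antidiagonal n, g p.1 p.2 := by
  rw [sum_add_distrib, two_mul, ← Nat.sum_antidiagonal_swap (f := fun p => g p.1 p.2)]
  rfl

theorem two_mul_sum_antidiagonal_fst_mul_catalan (n : ℕ) :
    2 * ∑ p ∈ antidiagonal n, p.1 * catalan p.1 * catalan p.2 = n * catalan (n + 1) := by
  rw [← sum_antidiagonal_add_swap n fun i j => i * catalan i * catalan j, catalan_succ', mul_sum]
  refine sum_congr rfl fun p hp => ?_
  rw [← mem_antidiagonal.mp hp]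
  ring

theorem two_mul_choose_eq_centralBinom_succ (n : ℕ) :
    2 * (2 * n + 1).choose n = (n + 1).centralBinom := by
  rw [Nat.centralBinom_eq_two_mul_choose, show 2 * (n + 1) = (2 * n + 1) + 1 by ring,
    Nat.choose_succ_succ, Nat.choose_symm_half]
  ring

theorem succ_succ_mul_catalan_succ_eq_two_mul_choose (n : ℕ) :
    (n + 2) * catalan (n + 1) = 2 * (2 * n + 1).choose n := by
  rw [two_mul_choose_eq_centralBinom_succ, ← succ_mul_catalan_eq_centralBinom]

theorem choose_succ_add_catalan_succ_eq_four_mul_choose (n : ℕ) :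
    (2 * (n + 1) + 1).choose (n + 1) + catalan (n + 1) = 4 * (2 * n + 1).choose n := by
  have h := Nat.succ_mul_centralBinom_succ (n + 1)
  rw [← two_mul_choose_eq_centralBinom_succ, ← two_mul_choose_eq_centralBinom_succ] at h
  have h2 := succ_succ_mul_catalan_succ_eq_two_mul_choose n
  apply Nat.eq_of_mul_eq_mul_left (show 0 < 2 * (n + 2) by omega)
  nlinarith

theorem sum_antidiagonal_four_pow_mul_catalan_add_choose_eq (n : ℕ) :
    ∑ p ∈ antidiagonal n, 4 ^ p.1 * catalan p.2 + (2 * n + 1).choose n = 2 * 4 ^ n := by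
  induction n with
  | zero => simp
  | succ n ih =>
    have hshift : ∑ p ∈ antidiagonal n, 4 ^ (p.1 + 1) * catalan p.2 =
        4 * ∑ p ∈ antidiagonal n, 4 ^ p.1 * catalan p.2 := by
      rw [mul_sum]
      exact sum_congr rfl fun _ _ => by ring
    rw [Nat.sum_antidiagonal_succ, hshift, pow_zero, one_mul, pow_succ]
    linarith [choose_succ_add_catalan_succ_eq_four_mul_choose n]

theorem two_mul_sum_antidiagonal_choose_mul_catalan (n : ℕ) :
    2 * ∑ p ∈ antidiagonal n, (2 * p.1 + 1).choose p.1 * catalan p.2 + catalan (n + 1) =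
      (2 * (n + 1) + 1).choose (n + 1) := by
  -- `2 (2 i + 1).choose i = (i + 2) C (i + 1)`: after the index shift `i ↦ i + 1` the sum is
  -- `∑_{i + j = n + 1} (i + 1) C i C j - C (n + 1)`.
  have hshift := Nat.sum_antidiagonal_succ (n := n)
    (f := fun p => (p.1 + 1) * catalan p.1 * catalan p.2)
  have hsplit : ∑ p ∈ antidiagonal (n + 1), (p.1 + 1) * catalan p.1 * catalan p.2 =
      ∑ p ∈ antidiagonal (n + 1), p.1 * catalan p.1 * catalan p.2 + catalan (n + 2) := by
    rw [catalan_succ' (n + 1), ← sum_add_distrib]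
    exact sum_congr rfl fun p _ => by ring
  have hB : 2 * ∑ p ∈ antidiagonal n, (2 * p.1 + 1).choose p.1 * catalan p.2 =
      ∑ p ∈ antidiagonal n, (p.1 + 1 + 1) * catalan (p.1 + 1) * catalan p.2 := by
    rw [mul_sum]
    exact sum_congr rfl fun p _ => by rw [← mul_assoc, ← succ_succ_mul_catalan_succ_eq_two_mul_choose]
  have hsym := two_mul_sum_antidiagonal_fst_mul_catalan (n + 1)
  have hC := succ_succ_mul_catalan_succ_eq_two_mul_choose (n + 1)
  simp only [catalan_zero, zero_add, one_mul, mul_one] at hshift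
  linarith

theorem add_choose_eq_four_pow_of_recurrence (T : ℕ → ℕ) (h0 : T 0 = 0)
    (hsucc : ∀ n, T (n + 1) = ∑ p ∈ antidiagonal n,
      (T p.1 * catalan p.2 + (2 * p.1 + 1) * catalan p.1 * catalan p.2 + catalan p.1 * T p.2))
    (n : ℕ) : T n + (2 * n + 1).choose n = 4 ^ n := by
  induction n using Nat.strong_induction_on with
  | _ n ih =>
  rcases n with _ | n
  · simp [h0]
  have hsplit : T (n + 1) = ∑ p ∈ antidiagonal n, (T p.1 * catalan p.2 + catalan p.1 * T p.2) +
      ∑ p ∈ antidiagonal n, (2 * p.1 + 1) * catalan p.1 * catalan p.2 := by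
    rw [hsucc, ← sum_add_distrib]
    exact sum_congr rfl fun _ _ => by ring
  have hT : ∑ p ∈ antidiagonal n, (T p.1 * catalan p.2 + catalan p.1 * T p.2) +
      2 * ∑ p ∈ antidiagonal n, (2 * p.1 + 1).choose p.1 * catalan p.2 =
      2 * ∑ p ∈ antidiagonal n, 4 ^ p.1 * catalan p.2 := by
    rw [← sum_antidiagonal_add_swap n fun i j => (2 * i + 1).choose i * catalan j,
      ← sum_antidiagonal_add_swap n fun i j => 4 ^ i * catalan j, ← sum_add_distrib]
    refine sum_congr rfl fun p hp => ?_
    have hp := mem_antidiagonal.mp hp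
    rw [← ih p.1 (by omega), ← ih p.2 (by omega)]
    ring
  have hlin : ∑ p ∈ antidiagonal n, (2 * p.1 + 1) * catalan p.1 * catalan p.2 =
      2 * ∑ p ∈ antidiagonal n, p.1 * catalan p.1 * catalan p.2 + catalan (n + 1) := by
    rw [catalan_succ', mul_sum, ← sum_add_distrib]
    exact sum_congr rfl fun _ _ => by ring
  rw [hsplit, pow_succ]
  linarith [two_mul_sum_antidiagonal_fst_mul_catalan n, succ_succ_mul_catalan_succ_eq_two_mul_choose n,
    two_mul_sum_antidiagonal_choose_mul_catalan n,
    sum_antidiagonal_four_pow_mul_catalan_add_choose_eq n]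

namespace PlaneTree

@[elab_as_elim]
theorem induction {motive : PlaneTree → Prop}
    (node : ∀ cs, (∀ t ∈ cs, motive t) → motive (node cs)) : ∀ t, motive t
  | .node cs => node cs fun t _ => induction node t

def depths (t : PlaneTree) : List ℕ := (vertices t).map List.length

def forestDepths (f : List PlaneTree) : List ℕ := f.flatMap depths

theorem vertices_node (cs : List PlaneTree) :
    vertices (node cs) =
      [] :: ((List.range cs.length).zip cs).flatMap fun x => (vertices x.2).map (x.1 :: ·) := by
  rw [vertices, List.flatMap_def, List.length_attach]
  have hzip : (List.range cs.length).zip cs =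
      ((List.range cs.length).zip cs.attach).map (Prod.map id Subtype.val) := by
    rw [← List.zip_map_right, List.attach_map_subtype_val]
  rw [hzip, List.map_map]
  rfl

theorem depths_node (cs : List PlaneTree) :
    depths (node cs) = 0 :: (forestDepths cs).map (· + 1) := by
  have hsnd : ((List.range cs.length).zip cs).map Prod.snd = cs := List.map_snd_zip (by simp)
  rw [depths, vertices_node, forestDepths, List.map_cons, List.map_flatMap, List.map_flatMap]
  conv_rhs => rw [← hsnd, List.flatMap_map]
  simp [depths, Function.comp_def]

theorem nodup_vertices (t : PlaneTree) : (vertices t).Nodup := by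
  induction t using induction with
  | node cs ih =>
  rw [vertices_node, List.nodup_cons]
  refine ⟨by simp, List.nodup_flatMap_map_cons _ Prod.fst _ ?_ fun x hx => ih _ (List.of_mem_zip hx).2⟩
  rw [List.map_fst_zip (by simp)]
  exact List.nodup_range

def forestSize (f : List PlaneTree) : ℕ := (forestDepths f).length

def forestWeight (f : List PlaneTree) : ℕ := ((forestDepths f).map fun d => 2 * d + 1).sum

/-- The root contributes `2 * 0 - 1 = 0`. -/
def weight (t : PlaneTree) : ℕ := ((depths t).map fun d => 2 * d - 1).sum

theorem length_vertices_node (cs : List PlaneTree) :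
    (vertices (node cs)).length = forestSize cs + 1 := by
  rw [← List.length_map List.length, ← depths, depths_node]
  simp [forestSize]

theorem forestDepths_cons_node (cs rest : List PlaneTree) :
    forestDepths (node cs :: rest) = 0 :: (forestDepths cs).map (· + 1) ++ forestDepths rest := by
  rw [forestDepths, List.flatMap_cons, depths_node]
  rfl

theorem forestSize_cons_node (cs rest : List PlaneTree) :
    forestSize (node cs :: rest) = forestSize cs + 1 + forestSize rest := by
  simp only [forestSize, forestDepths_cons_node, List.cons_append, List.length_cons,
    List.length_append, List.length_map]
  ring

theorem forestWeight_cons_node (cs rest : List PlaneTree) :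
    forestWeight (node cs :: rest) =
      forestWeight cs + (2 * forestSize cs + 1) + forestWeight rest := by
  simp only [forestWeight, forestSize, forestDepths_cons_node, List.cons_append, List.map_cons,
    List.map_append, List.sum_cons, List.sum_append, List.map_map, Function.comp_def, mul_add,
    add_right_comm _ 2, List.sum_map_add, List.map_const', List.sum_replicate, smul_eq_mul]
  ring

theorem weight_node (cs : List PlaneTree) : weight (node cs) = forestWeight cs := by
  simp [weight, forestWeight, depths_node, Function.comp_def, mul_add]

theorem node_injective : Function.Injective node := fun _ _ => node.inj

theorem node_cons_injective :
    Function.Injective fun f : List PlaneTree × List PlaneTree => node f.1 :: f.2 :=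
  fun _ _ h => by simpa [Prod.ext_iff] using h

open scoped Classical in
noncomputable def forests : ℕ → Finset (List PlaneTree)
  | 0 => {[]}
  | n + 1 => (antidiagonal n).attach.biUnion fun p =>
      (forests p.1.1 ×ˢ forests p.1.2).map
        ⟨fun f => node f.1 :: f.2, node_cons_injective⟩
decreasing_by
  all_goals have := mem_antidiagonal.mp p.2; omega

open scoped Classical in
theorem forests_succ (n : ℕ) :
    forests (n + 1) = (antidiagonal n).biUnion fun p =>
      (forests p.1 ×ˢ forests p.2).map
        ⟨fun f => node f.1 :: f.2, node_cons_injective⟩ := by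
  rw [forests]
  ext
  simp

@[simp]
theorem mem_forests {n : ℕ} {f : List PlaneTree} : f ∈ forests n ↔ forestSize f = n := by
  induction n using Nat.strong_induction_on generalizing f with
  | _ n ih =>
  rcases f with _ | ⟨⟨cs⟩, rest⟩ <;> rcases n with _ | n
  · simp [forests, forestSize, forestDepths]
  · simp [forests_succ, forestSize, forestDepths]
  · simp [forests, forestSize_cons_node]
  · simp only [forests_succ, mem_biUnion, mem_map, mem_product, HasAntidiagonal.mem_antidiagonal,
      forestSize_cons_node]
    constructor
    · rintro ⟨p, hp, ⟨c, r⟩, ⟨hc, hr⟩, h⟩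
      obtain ⟨⟨⟩, rfl⟩ := List.cons.inj h
      rw [ih _ (by omega)] at hc hr
      omega
    · intro h
      exact ⟨(forestSize cs, forestSize rest), by omega, (cs, rest),
        ⟨(ih _ (by omega)).mpr rfl, (ih _ (by omega)).mpr rfl⟩, rfl⟩

theorem sum_forests_succ {M : Type*} [AddCommMonoid M] (n : ℕ) (g : List PlaneTree → M) :
    ∑ f ∈ forests (n + 1), g f =
      ∑ p ∈ antidiagonal n, ∑ cs ∈ forests p.1, ∑ rest ∈ forests p.2, g (node cs :: rest) := by
  classical
  rw [forests_succ, sum_biUnion]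
  · exact sum_congr rfl fun p _ => by rw [sum_map, sum_product]; rfl
  · simp_rw [Set.PairwiseDisjoint, Set.Pairwise, disjoint_left]
    aesop

theorem card_forests (n : ℕ) : #(forests n) = catalan n := by
  induction n using Nat.strong_induction_on with
  | _ n ih =>
  rcases n with _ | n
  · simp [forests]
  rw [card_eq_sum_ones, sum_forests_succ, catalan_succ']
  refine sum_congr rfl fun p hp => ?_
  have hp := mem_antidiagonal.mp hp
  simp [ih p.1 (by omega), ih p.2 (by omega)]

noncomputable def totalForestWeight (n : ℕ) : ℕ := ∑ f ∈ forests n, forestWeight f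

theorem totalForestWeight_succ (n : ℕ) :
    totalForestWeight (n + 1) = ∑ p ∈ antidiagonal n,
      (totalForestWeight p.1 * catalan p.2 + (2 * p.1 + 1) * catalan p.1 * catalan p.2 +
        catalan p.1 * totalForestWeight p.2) := by
  rw [totalForestWeight, sum_forests_succ]
  refine sum_congr rfl fun p _ => ?_
  calc ∑ cs ∈ forests p.1, ∑ rest ∈ forests p.2, forestWeight (node cs :: rest)
      = ∑ cs ∈ forests p.1, ∑ rest ∈ forests p.2,
          (forestWeight cs + (2 * p.1 + 1) + forestWeight rest) :=
        sum_congr rfl fun cs hcs => sum_congr rfl fun rest _ => by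
          rw [forestWeight_cons_node, mem_forests.mp hcs]
    _ = _ := by
        simp only [sum_add_distrib, sum_const, smul_eq_mul, card_forests, ← mul_sum,
          totalForestWeight]
        ring

theorem totalForestWeight_add_choose_eq_four_pow (n : ℕ) :
    totalForestWeight n + (2 * n + 1).choose n = 4 ^ n :=
  add_choose_eq_four_pow_of_recurrence _ (by simp [totalForestWeight, forests, forestWeight,
    forestDepths]) totalForestWeight_succ n

noncomputable def trees : ℕ → Finset PlaneTree
  | 0 => ∅
  | n + 1 => (forests n).map ⟨node, node_injective⟩

theorem mem_trees {n : ℕ} {t : PlaneTree} : t ∈ trees n ↔ (vertices t).length = n := by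
  rcases t with ⟨cs⟩
  rcases n with _ | n <;> simp [trees, length_vertices_node]

theorem sum_weight_trees_succ (n : ℕ) :
    ∑ t ∈ trees (n + 1), weight t = totalForestWeight n := by
  simp [trees, weight_node, totalForestWeight]

theorem sum_toFinset_vertices_eq_weight (t : PlaneTree) :
    ∑ s ∈ (vertices t).toFinset, (2 * s.length - 1) = weight t := by
  rw [List.sum_toFinset _ (nodup_vertices t), weight, depths, List.map_map]
  rfl

theorem ncard_triples_eq_sum_weight (n : ℕ) :
    Set.ncard {x : PlaneTree × List ℕ × ℕ |
        (vertices x.1).length = n ∧ x.2.1 ∈ vertices x.1 ∧ x.2.1 ≠ [] ∧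
        1 ≤ x.2.2 ∧ x.2.2 ≤ 2 * x.2.1.length - 1} =
      ∑ t ∈ trees n, weight t := by
  let e : (Σ _ : PlaneTree, Σ _ : List ℕ, ℕ) ≃ PlaneTree × List ℕ × ℕ :=
    (Equiv.sigmaCongrRight fun _ => Equiv.sigmaEquivProd _ _).trans (Equiv.sigmaEquivProd _ _)
  calc _ = #(((trees n).sigma fun t => (vertices t).toFinset.sigma fun s =>
          Icc 1 (2 * s.length - 1)).map e.toEmbedding) := by
        rw [← Set.ncard_coe_finset]
        congr 1
        ext ⟨t, s, i⟩
        have hroot : 1 ≤ i → i ≤ 2 * s.length - 1 → s ≠ [] := by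
          rintro hi hi' rfl
          simp only [List.length_nil] at hi'
          omega
        simp +contextual [e, mem_trees, hroot]
    _ = ∑ t ∈ trees n, weight t := by
        simp [card_sigma, sum_toFinset_vertices_eq_weight]

end PlaneTree

theorem numTriples_eq_general (n : ℕ) :
    Set.ncard {x : PlaneTree × List ℕ × ℕ |
        (PlaneTree.vertices x.1).length = n ∧
        x.2.1 ∈ PlaneTree.vertices x.1 ∧
        x.2.1 ≠ [] ∧
        1 ≤ x.2.2 ∧ x.2.2 ≤ 2 * x.2.1.length - 1} =
      4 ^ (n - 1) - (2 * n - 1).choose (n - 1) := by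
  rw [PlaneTree.ncard_triples_eq_sum_weight]
  rcases n with _ | n
  · simp [PlaneTree.trees]
  · rw [PlaneTree.sum_weight_trees_succ, show 2 * (n + 1) - 1 = 2 * n + 1 by omega,
      Nat.add_sub_cancel, ← PlaneTree.totalForestWeight_add_choose_eq_four_pow n, Nat.add_sub_cancel]

/-- The number of triples `(A, s, i)` where `A` is a rooted plane tree with `n`
vertices, `s` is a non-root vertex of `A` and `1 ≤ i ≤ 2·depth(s) − 1`,
equals `4^(n-1) - C(2n-1, n-1)`. -/
theorem numTriples_eq (n : ℕ) (hn : 2 ≤ n) :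
    Set.ncard {x : PlaneTree × List ℕ × ℕ |
        (PlaneTree.vertices x.1).length = n ∧
        x.2.1 ∈ PlaneTree.vertices x.1 ∧
        x.2.1 ≠ [] ∧
        1 ≤ x.2.2 ∧ x.2.2 ≤ 2 * x.2.1.length - 1} =
      4 ^ (n - 1) - (2 * n - 1).choose (n - 1) :=
  numTriples_eq_general n
end

section
/- For every n ≥ 0, the total area under all Dyck paths of semilength n equals 4^n − binomial(2n+1, n), where the area under a Dyck path is the number of full unit squares (equivalently, the sum over all up-steps of the height reached, counted appropriately as in OEIS A008549) between the path and the x-axis. -/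
/-!
Cutting a nonempty Dyck path at its first return to the axis writes it uniquely as `U x D y`
with Dyck paths `x`, `y`; lifting `x` by one adds `2|x| + 1` to the area, so the total area
`A n` over paths of semilength `n` satisfies
`A (n + 1) = ∑_{i + j = n} (A i * C j + C i * A j + (2i + 1) * C i * C j)`.
The closed form `4 ^ n - (2n + 1) * C n` satisfies the same recurrence, by the convolutions
`∑_{i + j = n} (2i + 1) C i C j = (n + 1) C (n + 1)` (symmetrize in `i ↔ j`) and
`2 ∑_{i + j = n} 4 ^ i C j + binom(2n + 2, n + 1) = 4 ^ (n + 1)` (induction on `n`);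
finally `(2n + 1) C n = binom(2n + 1, n)`.
-/

open Finset DyckStep BinaryTree

theorem List.count_take_ofFn {α : Type*} [DecidableEq α] {m : ℕ} (g : Fin m → α) (a : α)
    (k : ℕ) : ((List.ofFn g).take k).count a = #{i : Fin m | i.1 < k ∧ g i = a} := by
  have count_eq_sum (l : List α) : l.count a = (l.map fun x => if x = a then 1 else 0).sum := by
    induction l <;> simp [List.count_cons, add_comm, *]
  rw [count_eq_sum, List.map_take, List.map_ofFn, List.sum_take_ofFn, ← Finset.filter_filter,
    Finset.card_filter]
  rfl

theorem List.count_ofFn {α : Type*} [DecidableEq α] {m : ℕ} (g : Fin m → α) (a : α) :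
    (List.ofFn g).count a = #{i | g i = a} := by
  simpa [List.take_of_length_le] using List.count_take_ofFn g a m

theorem sum_antidiagonal_two_mul_add_one_mul_catalan (n : ℕ) :
    ∑ ij ∈ antidiagonal n, (2 * ij.1 + 1) * (catalan ij.1 * catalan ij.2) =
      (n + 1) * catalan (n + 1) := by
  have hswap : ∑ ij ∈ antidiagonal n, (2 * ij.1 + 1) * (catalan ij.1 * catalan ij.2) =
      ∑ ij ∈ antidiagonal n, (2 * ij.2 + 1) * (catalan ij.1 * catalan ij.2) := by
    rw [← Nat.sum_antidiagonal_swap]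
    exact sum_congr rfl fun ij _ => by simp only [Prod.fst_swap, Prod.snd_swap]; ring
  have hsum : ∑ ij ∈ antidiagonal n, (2 * ij.1 + 1) * (catalan ij.1 * catalan ij.2) +
      ∑ ij ∈ antidiagonal n, (2 * ij.2 + 1) * (catalan ij.1 * catalan ij.2) =
      2 * ((n + 1) * catalan (n + 1)) := by
    rw [← sum_add_distrib, catalan_succ', mul_sum, mul_sum]
    refine sum_congr rfl fun ij hij => ?_
    rw [← mem_antidiagonal.mp hij]
    ring
  omega

theorem Nat.centralBinom_succ_add_two_mul_catalan (n : ℕ) :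
    centralBinom (n + 1) + 2 * catalan n = 4 * centralBinom n := by
  have h1 := succ_mul_centralBinom_succ n
  have h2 := succ_mul_catalan_eq_centralBinom n
  apply Nat.eq_of_mul_eq_mul_left n.succ_pos
  linarith

theorem two_mul_sum_antidiagonal_four_pow_mul_catalan_add_centralBinom (n : ℕ) :
    2 * ∑ ij ∈ antidiagonal n, 4 ^ ij.1 * catalan ij.2 + (n + 1).centralBinom =
      4 ^ (n + 1) := by
  induction n with
  | zero => simp [Nat.centralBinom, Nat.choose]
  | succ n ih =>
    have h := Nat.centralBinom_succ_add_two_mul_catalan (n + 1)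
    rw [Nat.sum_antidiagonal_succ]
    simp only [pow_zero, one_mul, pow_succ', mul_assoc, ← mul_sum] at ih ⊢
    linarith

theorem Nat.choose_two_mul_add_one_eq_mul_catalan (n : ℕ) :
    (2 * n + 1).choose n = (2 * n + 1) * catalan n := by
  have h1 := add_one_mul_choose_eq (2 * n) n
  have h2 := succ_mul_catalan_eq_centralBinom n
  rw [choose_symm_half, ← centralBinom_eq_two_mul_choose, ← h2] at h1
  apply Nat.eq_of_mul_eq_mul_left n.succ_pos
  linarith

theorem BinaryTree.sum_pairwiseNode {M : Type*} [AddCommMonoid M]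
    (a b : Finset (BinaryTree Unit)) (g : BinaryTree Unit → M) :
    ∑ t ∈ pairwiseNode a b, g t = ∑ x ∈ a, ∑ y ∈ b, g (x △ y) := by
  rw [sum_map, sum_product]
  rfl

def DyckStep.equivBool : DyckStep ≃ Bool where
  toFun
    | U => true
    | D => false
  invFun
    | true => U
    | false => D
  left_inv s := by cases s <;> rfl
  right_inv b := by cases b <;> rfl

@[simp] lemma DyckStep.equivBool_U : equivBool U = true := rfl
@[simp] lemma DyckStep.equivBool_D : equivBool D = false := rfl

namespace DyckWord

variable (p q : DyckWord)

def height (k : ℕ) : ℕ := (p.toList.take k).count U - (p.toList.take k).count D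

def area : ℕ := ∑ k ∈ range (p.toList.length + 1), p.height k

@[simp] lemma height_zero : p.height 0 = 0 := by simp [height]

lemma height_length : p.height p.toList.length = 0 := by
  simp [height, p.count_U_eq_count_D]

lemma height_add_of_le {k : ℕ} (hk : k ≤ p.toList.length) : (p + q).height k = p.height k := by
  simp only [height, show (p + q).toList = p.toList ++ q.toList from rfl,
    List.take_append_of_le_length hk]

lemma height_add_length_add (k : ℕ) : (p + q).height (p.toList.length + k) = q.height k := by
  simp only [height, show (p + q).toList = p.toList ++ q.toList from rfl,
    List.take_length_add_append, List.count_append, p.count_U_eq_count_D, Nat.add_sub_add_left]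

lemma height_nest_succ {k : ℕ} (hk : k ≤ p.toList.length) :
    p.nest.height (k + 1) = p.height k + 1 := by
  have hprefix := p.count_D_le_count_U k
  simp only [height, show p.nest.toList = U :: (p.toList ++ [D]) from rfl, List.take_succ_cons,
    List.take_append_of_le_length hk, List.count_cons_self, ne_eq, reduceCtorEq,
    not_false_eq_true, List.count_cons_of_ne]
  omega

@[simp] lemma area_zero : area 0 = 0 := by
  simp [area, show (0 : DyckWord).toList = [] from rfl]

lemma area_eq_sum_range_length : p.area = ∑ k ∈ range p.toList.length, p.height k := by
  rw [area, sum_range_succ, height_length, add_zero]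

theorem area_add : (p + q).area = p.area + q.area := by
  rw [area, show (p + q).toList.length = p.toList.length + q.toList.length from
    List.length_append .., add_assoc, sum_range_add, area_eq_sum_range_length, area]
  congr 1
  · exact sum_congr rfl fun k hk => p.height_add_of_le q (mem_range.mp hk).le
  · exact sum_congr rfl fun k _ => p.height_add_length_add q k

theorem area_nest : p.nest.area = p.area + 2 * p.semilength + 1 := by
  have hlen : p.nest.toList.length = p.toList.length + 1 + 1 := by simp [nest]
  have hlast : p.nest.height (p.toList.length + 1 + 1) = 0 := hlen ▸ p.nest.height_length
  rw [area, hlen, sum_range_succ, hlast, add_zero, sum_range_succ', height_zero,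
    add_zero, sum_congr rfl fun k hk => p.height_nest_succ (Nat.lt_succ_iff.mp (mem_range.mp hk)),
    sum_add_distrib, ← area, sum_const, card_range, smul_eq_mul, mul_one,
    two_mul_semilength_eq_length, add_assoc]

lemma area_ofTree_node (l r : BinaryTree Unit) :
    (ofTree (l △ r)).area = (ofTree l).area + (ofTree r).area + (2 * l.numNodes + 1) := by
  rw [ofTree, area_add, area_nest, ← numNodes_toTree, toTree_ofTree]
  ring

def totalArea (n : ℕ) : ℕ := ∑ p : {p : DyckWord // p.semilength = n}, p.1.area

lemma totalArea_eq_sum_treesOfNumNodesEq (n : ℕ) :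
    totalArea n = ∑ t ∈ treesOfNumNodesEq n, (ofTree t).area := by
  rw [← sum_coe_sort, totalArea]
  exact Fintype.sum_equiv (equivTreesOfNumNodesEq n) _ _ fun p => by simp [ofTree_toTree]

theorem totalArea_succ (n : ℕ) :
    totalArea (n + 1) = ∑ ij ∈ antidiagonal n, (totalArea ij.1 * catalan ij.2 +
      catalan ij.1 * totalArea ij.2 + (2 * ij.1 + 1) * (catalan ij.1 * catalan ij.2)) := by
  rw [totalArea_eq_sum_treesOfNumNodesEq, treesOfNumNodesEq_succ, sum_biUnion]
  · refine sum_congr rfl fun ij hij => ?_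
    obtain ⟨i, j⟩ := ij
    have hnodes : ∀ t ∈ treesOfNumNodesEq i, t.numNodes = i := fun _ => mem_treesOfNumNodesEq.mp
    rw [sum_pairwiseNode]
    simp only [area_ofTree_node]
    rw [sum_congr rfl fun x hx => by rw [hnodes x hx]]
    simp only [sum_add_distrib, sum_const, treesOfNumNodesEq_card_eq_catalan, smul_eq_mul,
      ← totalArea_eq_sum_treesOfNumNodesEq, ← mul_sum]
    ring
  · rintro ⟨i, j⟩ - ⟨i', j'⟩ - hne
    simp only [Function.onFun, disjoint_left, mem_map, mem_product, mem_treesOfNumNodesEq]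
    rintro _ ⟨⟨x, y⟩, ⟨rfl, rfl⟩, rfl⟩ ⟨⟨x', y'⟩, ⟨rfl, rfl⟩, h⟩
    obtain ⟨rfl, rfl⟩ := Prod.ext_iff.mp (Function.Embedding.injective _ h)
    exact hne rfl

theorem totalArea_add_two_mul_add_one_mul_catalan (n : ℕ) :
    totalArea n + (2 * n + 1) * catalan n = 4 ^ n := by
  induction n using Nat.strong_induction_on with
  | _ n ih =>
  cases n with
  | zero => simp [totalArea_eq_sum_treesOfNumNodesEq, ofTree]
  | succ n =>
    have hswap : ∑ ij ∈ antidiagonal n, catalan ij.1 * totalArea ij.2 =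
        ∑ ij ∈ antidiagonal n, totalArea ij.1 * catalan ij.2 := by
      rw [← Nat.sum_antidiagonal_swap]
      simp only [Prod.fst_swap, Prod.snd_swap, mul_comm]
    have hconv : ∑ ij ∈ antidiagonal n, totalArea ij.1 * catalan ij.2 +
        ∑ ij ∈ antidiagonal n, (2 * ij.1 + 1) * (catalan ij.1 * catalan ij.2) =
        ∑ ij ∈ antidiagonal n, 4 ^ ij.1 * catalan ij.2 := by
      rw [← sum_add_distrib]
      refine sum_congr rfl fun ij hij => ?_
      rw [← ih ij.1 (Nat.lt_succ_of_le (HasAntidiagonal.antidiagonal.fst_le hij))]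
      ring
    have h1 := sum_antidiagonal_two_mul_add_one_mul_catalan n
    have h2 := two_mul_sum_antidiagonal_four_pow_mul_catalan_add_centralBinom n
    have h3 := succ_mul_catalan_eq_centralBinom (n + 1)
    rw [totalArea_succ, sum_add_distrib, sum_add_distrib, hswap]
    linarith

variable {n : ℕ}

def boolFns (n : ℕ) : Finset (Fin (2 * n) → Bool) :=
  {f | #{i | f i = true} = n ∧
    ∀ k ≤ 2 * n, #{i | i.1 < k ∧ f i = false} ≤ #{i | i.1 < k ∧ f i = true}}

lemma count_take_ofFn_equivBool_symm {m : ℕ} (f : Fin m → Bool) (s : DyckStep) (k : ℕ) :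
    ((List.ofFn (equivBool.symm ∘ f)).take k).count s = #{i | i.1 < k ∧ f i = equivBool s} := by
  simp [List.count_take_ofFn, Equiv.symm_apply_eq]

lemma count_ofFn_equivBool_symm {m : ℕ} (f : Fin m → Bool) (s : DyckStep) :
    (List.ofFn (equivBool.symm ∘ f)).count s = #{i | f i = equivBool s} := by
  simp [List.count_ofFn, Equiv.symm_apply_eq]

def ofBoolFn (f : Fin (2 * n) → Bool) (hf : f ∈ boolFns n) : DyckWord where
  toList := List.ofFn (equivBool.symm ∘ f)
  count_U_eq_count_D := by
    have hsplit := card_filter_add_card_filter_not (s := univ) (fun i => f i = true)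
    simp only [Bool.not_eq_true, card_univ, Fintype.card_fin] at hsplit
    rw [count_ofFn_equivBool_symm, count_ofFn_equivBool_symm, equivBool_U, equivBool_D]
    have := (mem_filter.mp hf).2.1
    omega
  count_D_le_count_U k := by
    rw [List.take_eq_take_min, List.length_ofFn, count_take_ofFn_equivBool_symm,
      count_take_ofFn_equivBool_symm]
    exact (mem_filter.mp hf).2.2 _ (min_le_right ..)

lemma semilength_ofBoolFn (f : Fin (2 * n) → Bool) (hf : f ∈ boolFns n) :
    (ofBoolFn f hf).semilength = n := by
  rw [semilength, ofBoolFn, count_ofFn_equivBool_symm]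
  exact (mem_filter.mp hf).2.1

lemma area_ofBoolFn (f : Fin (2 * n) → Bool) (hf : f ∈ boolFns n) :
    (ofBoolFn f hf).area = ∑ k ∈ range (2 * n + 1),
      (#{i | i.1 < k ∧ f i = true} - #{i | i.1 < k ∧ f i = false}) := by
  rw [area, show (ofBoolFn f hf).toList.length = 2 * n from List.length_ofFn]
  refine sum_congr rfl fun k _ => ?_
  rw [height, ofBoolFn, count_take_ofFn_equivBool_symm, count_take_ofFn_equivBool_symm]
  rfl

def toBoolFn (p : {p : DyckWord // p.semilength = n}) : Fin (2 * n) → Bool := fun i =>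
  equivBool (p.1.toList[i.1]'(by rw [← two_mul_semilength_eq_length, p.2]; exact i.2))

lemma ofFn_toBoolFn (p : {p : DyckWord // p.semilength = n}) :
    List.ofFn (equivBool.symm ∘ toBoolFn p) = p.1.toList :=
  List.ext_getElem (by simp [← two_mul_semilength_eq_length, p.2]) fun _ _ _ => by simp [toBoolFn]

lemma toBoolFn_mem_boolFns (p : {p : DyckWord // p.semilength = n}) : toBoolFn p ∈ boolFns n := by
  refine mem_filter.mpr ⟨mem_univ _, ?_, fun k _ => ?_⟩
  · rw [← equivBool_U, ← count_ofFn_equivBool_symm, ofFn_toBoolFn]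
    exact p.2
  · rw [← equivBool_U, ← equivBool_D, ← count_take_ofFn_equivBool_symm,
      ← count_take_ofFn_equivBool_symm, ofFn_toBoolFn]
    exact p.1.count_D_le_count_U k

theorem sum_boolFns_eq_totalArea (n : ℕ) :
    ∑ f ∈ boolFns n, ∑ k ∈ range (2 * n + 1),
      (#{i | i.1 < k ∧ f i = true} - #{i | i.1 < k ∧ f i = false}) = totalArea n := by
  refine sum_bij' (fun f hf => ⟨ofBoolFn f hf, semilength_ofBoolFn f hf⟩)
    (fun p _ => toBoolFn p) (fun _ _ => mem_univ _) (fun p _ => toBoolFn_mem_boolFns p)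
    (fun f hf => ?_) (fun p _ => Subtype.ext (DyckWord.ext (ofFn_toBoolFn p)))
    (fun f hf => (area_ofBoolFn f hf).symm)
  funext i
  simp [toBoolFn, ofBoolFn]

end DyckWord

/-- `f i = true` is an up-step. The sum of the heights at the abscissas `0, …, 2n` is the
area under the path: each unit interval contributes the mean of its two end heights, and
both ends of the path are at height `0`. -/
theorem total_area_under_dyck_paths (n : ℕ) :
    ∑ f ∈ Finset.univ.filter (fun f : Fin (2 * n) → Bool =>
        ((Finset.univ.filter fun i : Fin (2 * n) => f i = true).card = n) ∧
        (∀ k ≤ 2 * n,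
          (Finset.univ.filter fun i : Fin (2 * n) => i.1 < k ∧ f i = false).card ≤
          (Finset.univ.filter fun i : Fin (2 * n) => i.1 < k ∧ f i = true).card)),
      (∑ k ∈ Finset.range (2 * n + 1),
        ((Finset.univ.filter fun i : Fin (2 * n) => i.1 < k ∧ f i = true).card -
         (Finset.univ.filter fun i : Fin (2 * n) => i.1 < k ∧ f i = false).card)) =
    4 ^ n - (2 * n + 1).choose n := by
  have hclosed := DyckWord.totalArea_add_two_mul_add_one_mul_catalan n
  rw [← Nat.choose_two_mul_add_one_eq_mul_catalan] at hclosed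
  change ∑ f ∈ DyckWord.boolFns n, _ = _
  rw [DyckWord.sum_boolFns_eq_totalArea]
  omega
end
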